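/- Let V = {1,...,n}, σ ⊆ V, and g ∈ S_n. Define p(σ) = ∏_{j ∈ σ} (-1)^{j-1}, and for any subset τ ⊆ V define c(g,τ) to be the sign of the permutation of the listed sequence (g(t_1),...,g(t_k)) (where t_1 < ... < t_k enumerate τ) needed to sort it into increasing order. Then p(σ) · sgn(g) · c(g, V∖σ) = c(g,σ) · p(g(σ)). -/

import Mathlib

open Finset

/-- `p(σ) = ∏_{j ∈ σ} (-1)^(j-1)` (with `Fin n` as the 0-based labels `{1,…,n}`,
so the `j`-th smallest label contributes `(-1)^(j.val)`). -/
def psign {n : ℕ} (σ : Finset (Fin n)) : ℤˣ :=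
  ∏ j ∈ σ, (-1 : ℤˣ) ^ (j : ℕ)

/-- `c(g,τ)`: the sign of the permutation sorting the sequence `(g t₁, …, g t_k)`
(where `t₁ < ⋯ < t_k` enumerate `τ`) into increasing order, i.e. `(-1)` to the
number of inversions of `g` on `τ`. -/
def csign {n : ℕ} (g : Equiv.Perm (Fin n)) (τ : Finset (Fin n)) : ℤˣ :=
  (-1 : ℤˣ) ^ ((τ ×ˢ τ).filter (fun p => p.1 < p.2 ∧ g p.2 < g p.1)).card

/-! Every sign in the identity is a product of `-1`'s over inversions `(a, b)`
(`a < b`, `g b < g a`) with `a ∈ A`, `b ∈ B`, for `A, B ∈ {σ, σᶜ}`; call that product `X(A, B)`.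
For a single `j`, counting `#{a | a < j} = j` and `#{a | g a < g j} = g j` shows
`(-1)^j · X({j}, V) = X(V, {j}) · (-1)^(g j)`. Multiplying over `j ∈ σ` and cancelling `X(σ, σ)`
gives `p(σ) · X(σ, σᶜ) = X(σᶜ, σ) · p(g σ)`. Since `sgn g` is the product of the four
`X(A, B)` and each of them squares to `1`, the theorem follows. -/

namespace Equiv.Perm

variable {n : ℕ}

def inversionSign (g : Perm (Fin n)) (A B : Finset (Fin n)) : ℤˣ :=
  ∏ a ∈ A, ∏ b ∈ B, if a < b ∧ g b < g a then -1 else 1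

theorem sign_eq_inversionSign_univ (g : Perm (Fin n)) : sign g = g.inversionSign univ univ := by
  rw [sign_eq_prod_prod_Ioi, inversionSign]
  refine prod_congr rfl fun i _ => ?_
  simp_rw [ite_and]
  rw [← prod_filter, filter_lt_eq_Ioi]
  refine prod_congr rfl fun j hj => ?_
  have hne : g i ≠ g j := g.injective.ne (mem_Ioi.mp hj).ne
  grind

theorem inversionSign_mul_compl_left (g : Perm (Fin n)) (s B : Finset (Fin n)) :
    g.inversionSign s B * g.inversionSign sᶜ B = g.inversionSign univ B :=
  prod_mul_prod_compl s _

theorem inversionSign_mul_compl_right (g : Perm (Fin n)) (A s : Finset (Fin n)) :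
    g.inversionSign A s * g.inversionSign A sᶜ = g.inversionSign A univ := by
  simp only [inversionSign, ← prod_mul_distrib, prod_mul_prod_compl]

theorem ite_lt_mul_ite_inversion (g : Perm (Fin n)) (a j : Fin n) :
    ((if a < j then -1 else 1) * if j < a ∧ g a < g j then -1 else 1 : ℤˣ) =
      (if g a < g j then -1 else 1) * if a < j ∧ g j < g a then -1 else 1 := by
  have hinj : g a = g j ↔ a = j := g.injective.eq_iff
  grind

theorem prod_ite_lt_eq_neg_one_pow (j : Fin n) :
    ∏ a, (if a < j then -1 else 1 : ℤˣ) = (-1) ^ (j : ℕ) := by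
  rw [prod_ite, prod_const, prod_const_one, mul_one, filter_gt_eq_Iio, Fin.card_Iio]

theorem neg_one_pow_mul_inversionSign_singleton (g : Perm (Fin n)) (j : Fin n) :
    (-1) ^ (j : ℕ) * g.inversionSign {j} univ = g.inversionSign univ {j} * (-1) ^ (g j : ℕ) := by
  simp only [inversionSign, prod_singleton]
  rw [← prod_ite_lt_eq_neg_one_pow j, ← prod_ite_lt_eq_neg_one_pow (g j),
    ← Equiv.prod_comp g (fun b => if b < g j then -1 else 1), ← prod_mul_distrib, ← prod_mul_distrib]
  exact prod_congr rfl fun a _ => by rw [ite_lt_mul_ite_inversion, mul_comm]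

end Equiv.Perm

open Equiv.Perm

theorem csign_eq_inversionSign {n : ℕ} (g : Equiv.Perm (Fin n)) (τ : Finset (Fin n)) :
    csign g τ = g.inversionSign τ τ := by
  rw [csign, inversionSign, ← prod_product', prod_ite, prod_const, prod_const_one, mul_one]

theorem psign_mul_inversionSign_univ {n : ℕ} (g : Equiv.Perm (Fin n)) (σ : Finset (Fin n)) :
    psign σ * g.inversionSign σ univ = g.inversionSign univ σ * psign (σ.image g) := by
  have hl : g.inversionSign σ univ = ∏ j ∈ σ, g.inversionSign {j} univ := by
    simp only [inversionSign, prod_singleton]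
  have hr : g.inversionSign univ σ = ∏ j ∈ σ, g.inversionSign univ {j} := by
    simp only [inversionSign, prod_singleton]
    exact prod_comm
  rw [psign, psign, prod_image g.injective.injOn, hl, hr, ← prod_mul_distrib, ← prod_mul_distrib]
  exact prod_congr rfl fun j _ => neg_one_pow_mul_inversionSign_singleton g j

theorem psign_mul_inversionSign_compl {n : ℕ} (g : Equiv.Perm (Fin n)) (σ : Finset (Fin n)) :
    psign σ * g.inversionSign σ σᶜ = g.inversionSign σᶜ σ * psign (σ.image g) := by
  have h := psign_mul_inversionSign_univ g σ
  rw [← inversionSign_mul_compl_right g σ σ, ← inversionSign_mul_compl_left g σ σ,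
    mul_left_comm (psign σ), mul_assoc] at h
  exact mul_left_cancel h

/-- `p(σ) ⋅ sgn(g) ⋅ c(g, V∖σ) = c(g,σ) ⋅ p(g(σ))`. -/
theorem psign_sign_csign (n : ℕ) (σ : Finset (Fin n)) (g : Equiv.Perm (Fin n)) :
    psign σ * Equiv.Perm.sign g * csign g σᶜ = csign g σ * psign (σ.image g) := by
  rw [sign_eq_inversionSign_univ, ← inversionSign_mul_compl_left g σ,
    ← inversionSign_mul_compl_right g σ σ, ← inversionSign_mul_compl_right g σᶜ σ,
    csign_eq_inversionSign, csign_eq_inversionSign]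
  calc psign σ * (g.inversionSign σ σ * g.inversionSign σ σᶜ *
          (g.inversionSign σᶜ σ * g.inversionSign σᶜ σᶜ)) * g.inversionSign σᶜ σᶜ
      = g.inversionSign σ σ * (psign σ * g.inversionSign σ σᶜ) * g.inversionSign σᶜ σ *
          (g.inversionSign σᶜ σᶜ * g.inversionSign σᶜ σᶜ) := by ac_rfl
    _ = g.inversionSign σ σ * (g.inversionSign σᶜ σ * g.inversionSign σᶜ σ) *
          psign (σ.image g) := by
        rw [psign_mul_inversionSign_compl, Int.units_mul_self, mul_one]; ac_rfl
    _ = g.inversionSign σ σ * psign (σ.image g) := by rw [Int.units_mul_self, mul_one]
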